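/- arXiv:2512.12645 — 3 statements merged into one kernel-verified Lean document; each statement's English description precedes it below -/
import Mathlib

section
/- Gate-transform theorem for finite groups: Let G be a finite group and let U_{0→i} = SWAP_{0,i} ∘ W_i with W_i = ∑_{g∈G} |g⟩⟨g|_i ⊗ 1_0 ⊗ ⊗_{k∈R} U_R(g)_k be the finite-group frame-change unitary. Let U_S be a unitary operator on the factor H_S for some S ∈ R, embedded into H as Ũ_S by tensoring with the identity on all other factors. Then the transformed gate U_S^(i) := U_{0→i} Ũ_S U_{0→i}† equals the controlled operator ∑_{g∈G} |g⟩⟨g|_0 ⊗ 1_i ⊗ (⊗_{k∈R∖{S}} 1_k) ⊗ ( U_R(g) U_S U_R(g)† )_S, and U_S^(i) is unitary. -/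
open Matrix Finset

/-- The right-regular representation of a finite group `G` on `ℂ^G`:
`U_R(h)|g⟩ = |g h⁻¹⟩`. -/
def rightReg {G : Type*} [Group G] [Fintype G] [DecidableEq G] (h : G) :
    Matrix G G ℂ :=
  Matrix.of fun a b => if a = b * h⁻¹ then 1 else 0

/-- The rank-one projector `|g⟩⟨g|` on `ℂ^G`. -/
def ketbra {G : Type*} [Group G] [Fintype G] [DecidableEq G] (g : G) :
    Matrix G G ℂ :=
  Matrix.of fun a b => if a = g ∧ b = g then 1 else 0

/-- Tensor product of an operator on the factor `0`, an operator on the factor `i`,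
and an operator on the remaining registers `⊗_{k∈R} H_k`, as a matrix on
`H = H_0 ⊗ H_i ⊗ ⊗_{k∈R} H_k` indexed by `G × G × (R → G)`. -/
def tens3 {G : Type*} [Group G] [Fintype G] [DecidableEq G]
    {R : Type*} [Fintype R] [DecidableEq R]
    (P Q : Matrix G G ℂ) (T : Matrix (R → G) (R → G) ℂ) :
    Matrix (G × G × (R → G)) (G × G × (R → G)) ℂ :=
  Matrix.of fun a b => P a.1 b.1 * Q a.2.1 b.2.1 * T a.2.2 b.2.2

/-- The tensor product `⊗_{k∈R} M k` of one-site operators, as a matrix on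
`⊗_{k∈R} H_k` indexed by `R → G`. -/
def prodMat {G : Type*} [Group G] [Fintype G] [DecidableEq G]
    {R : Type*} [Fintype R] [DecidableEq R]
    (M : R → Matrix G G ℂ) : Matrix (R → G) (R → G) ℂ :=
  Matrix.of fun f f' => ∏ k : R, M k (f k) (f' k)

/-- The controlled part `W_i = ∑_{g∈G} |g⟩⟨g|_i ⊗ 1_0 ⊗ ⊗_{k∈R} U_R(g)_k`
of the finite-group frame-change unitary. -/
noncomputable def Wmap (G : Type*) [Group G] [Fintype G] [DecidableEq G]
    (R : Type*) [Fintype R] [DecidableEq R] :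
    Matrix (G × G × (R → G)) (G × G × (R → G)) ℂ :=
  ∑ g : G, tens3 (1 : Matrix G G ℂ) (ketbra g) (prodMat fun _ : R => rightReg g)

/-- `SWAP_{0,i}`: exchange of the tensor factors `0` and `i`. -/
def swap0i (G : Type*) [Group G] [Fintype G] [DecidableEq G]
    (R : Type*) [Fintype R] [DecidableEq R] :
    Matrix (G × G × (R → G)) (G × G × (R → G)) ℂ :=
  Matrix.of fun a b => if a.1 = b.2.1 ∧ a.2.1 = b.1 ∧ a.2.2 = b.2.2 then 1 else 0

/-- The frame-change operator `U_{0→i} = SWAP_{0,i} ∘ W_i`. -/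
noncomputable def frameChange (G : Type*) [Group G] [Fintype G] [DecidableEq G]
    (R : Type*) [Fintype R] [DecidableEq R] :
    Matrix (G × G × (R → G)) (G × G × (R → G)) ℂ :=
  swap0i G R * Wmap G R


/-- Embedding of a one-site operator `A` at site `S ∈ R` into `⊗_{k∈R} H_k`
(identity on every other site). -/
def embedAt {G : Type*} [Group G] [Fintype G] [DecidableEq G]
    {R : Type*} [Fintype R] [DecidableEq R]
    (S : R) (A : Matrix G G ℂ) : Matrix (R → G) (R → G) ℂ :=
  prodMat fun k => if k = S then A else 1

section Aux
variable {G : Type*} [Group G] [Fintype G] [DecidableEq G]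
    {R : Type*} [Fintype R] [DecidableEq R]

lemma prodMat_one : prodMat (fun _ : R => (1 : Matrix G G ℂ)) = 1 := by
  ext f f'
  simp only [prodMat, of_apply, Matrix.one_apply, Fintype.prod_boole, funext_iff]

lemma prodMat_mul (M N : R → Matrix G G ℂ) :
    prodMat M * prodMat N = prodMat (fun k => M k * N k) := by
  ext f f''
  simp only [Matrix.mul_apply, prodMat, of_apply, ← Finset.prod_mul_distrib]
  rw [Fintype.prod_sum]

lemma prodMat_conjT (M : R → Matrix G G ℂ) :
    (prodMat M)ᴴ = prodMat (fun k => (M k)ᴴ) := by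
  ext f f'
  simp only [conjTranspose_apply, prodMat, of_apply, star_prod]

lemma tens3_mul (P Q : Matrix G G ℂ) (T : Matrix (R → G) (R → G) ℂ)
    (P' Q' : Matrix G G ℂ) (T' : Matrix (R → G) (R → G) ℂ) :
    tens3 P Q T * tens3 P' Q' T' = tens3 (P * P') (Q * Q') (T * T') := by
  ext a b
  simp only [Matrix.mul_apply, tens3, of_apply, Fintype.sum_prod_type]
  have h : ∀ (c1 c2 : G) (c3 : R → G),
      (P a.1 c1 * Q a.2.1 c2 * T a.2.2 c3) * (P' c1 b.1 * Q' c2 b.2.1 * T' c3 b.2.2)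
        = (P a.1 c1 * P' c1 b.1) * ((Q a.2.1 c2 * Q' c2 b.2.1) * (T a.2.2 c3 * T' c3 b.2.2)) :=
    fun c1 c2 c3 => by ring
  simp only [h, ← Finset.mul_sum, ← Finset.sum_mul]
  ring

lemma tens3_conjT (P Q : Matrix G G ℂ) (T : Matrix (R → G) (R → G) ℂ) :
    (tens3 P Q T)ᴴ = tens3 Pᴴ Qᴴ Tᴴ := by
  ext a b
  simp only [conjTranspose_apply, tens3, of_apply, star_mul']

lemma tens3_one : (tens3 1 1 1 : Matrix (G × G × (R → G)) _ ℂ) = 1 := by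
  ext a b
  simp only [tens3, of_apply, Matrix.one_apply, Prod.ext_iff]
  split_ifs with h1 h2 h3 <;> simp_all

end Aux

section Perm
variable (G : Type*) [Group G] [Fintype G] [DecidableEq G]
    (R : Type*) [Fintype R] [DecidableEq R]

/-- The swap permutation. -/
def esw : (G × G × (R → G)) ≃ (G × G × (R → G)) where
  toFun a := (a.2.1, a.1, a.2.2)
  invFun a := (a.2.1, a.1, a.2.2)
  left_inv a := rfl
  right_inv a := rfl

/-- The permutation underlying `Wmap`. -/
def ewm : (G × G × (R → G)) ≃ (G × G × (R → G)) where
  toFun a := (a.1, a.2.1, fun k => a.2.2 k * a.2.1)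
  invFun b := (b.1, b.2.1, fun k => b.2.2 k * b.2.1⁻¹)
  left_inv a := by simp
  right_inv b := by simp

/-- The permutation underlying `frameChange`. -/
def efc : (G × G × (R → G)) ≃ (G × G × (R → G)) where
  toFun a := (a.2.1, a.1, fun k => a.2.2 k * a.1)
  invFun b := (b.2.1, b.1, fun k => b.2.2 k * b.2.1⁻¹)
  left_inv a := by simp
  right_inv b := by simp

lemma swap0i_eq : swap0i G R = (esw G R).toPEquiv.toMatrix := by
  ext a b
  simp only [swap0i, of_apply, PEquiv.toMatrix_apply, Equiv.toPEquiv_apply,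
    Option.mem_def, Option.some.injEq, esw, Equiv.coe_fn_mk, Prod.ext_iff]
  refine if_congr ⟨fun ⟨h1, h2, h3⟩ => ⟨h2, h1, h3⟩, fun ⟨h1, h2, h3⟩ => ⟨h2, h1, h3⟩⟩ rfl rfl

lemma Wmap_eq : Wmap G R = (ewm G R).toPEquiv.toMatrix := by
  ext a b
  simp only [Wmap, Matrix.sum_apply, tens3, of_apply, ketbra, prodMat, rightReg,
    Matrix.one_apply, PEquiv.toMatrix_apply, Equiv.toPEquiv_apply,
    Option.mem_def, Option.some.injEq, ewm, Equiv.coe_fn_mk, Prod.ext_iff, funext_iff]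
  rw [Finset.sum_eq_single a.2.1]
  · simp only [ite_zero_mul_ite_zero, one_mul, Fintype.prod_boole]
    refine if_congr ?_ rfl rfl
    constructor
    · rintro ⟨⟨h1, -, h2⟩, h3⟩
      exact ⟨h1, h2.symm, fun k => by rw [h3 k]; group⟩
    · rintro ⟨h1, h2, h3⟩
      exact ⟨⟨h1, trivial, h2.symm⟩, fun k => by rw [← h3 k]; group⟩
  · intro g _ hg
    simp [Ne.symm hg]
  · simp

end Perm


section Perm2
variable (G : Type*) [Group G] [Fintype G] [DecidableEq G]
    (R : Type*) [Fintype R] [DecidableEq R]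

lemma frameChange_eq : frameChange G R = (efc G R).toPEquiv.toMatrix := by
  rw [frameChange, swap0i_eq, Wmap_eq, ← PEquiv.toMatrix_trans, ← Equiv.toPEquiv_trans]
  congr 1

lemma permMatrix_conjT {n : Type*} [Fintype n] [DecidableEq n] (e : n ≃ n) :
    ((e.toPEquiv.toMatrix : Matrix n n ℂ))ᴴ = e.symm.toPEquiv.toMatrix := by
  rw [Equiv.toPEquiv_symm, PEquiv.toMatrix_symm]
  ext a b
  simp only [conjTranspose_apply, transpose_apply, PEquiv.toMatrix_apply]
  split_ifs <;> simp

lemma frameChange_conjT : (frameChange G R)ᴴ = (efc G R).symm.toPEquiv.toMatrix := by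
  rw [frameChange_eq, permMatrix_conjT]

lemma frameChange_mul_conjT : frameChange G R * (frameChange G R)ᴴ = 1 := by
  rw [frameChange_conjT, frameChange_eq, ← PEquiv.toMatrix_trans, ← Equiv.toPEquiv_trans,
    Equiv.self_trans_symm, Equiv.toPEquiv_refl, PEquiv.toMatrix_refl]

lemma frameChange_conjT_mul : (frameChange G R)ᴴ * frameChange G R = 1 := by
  rw [frameChange_conjT, frameChange_eq, ← PEquiv.toMatrix_trans, ← Equiv.toPEquiv_trans,
    Equiv.symm_trans_self, Equiv.toPEquiv_refl, PEquiv.toMatrix_refl]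

lemma frameChange_conj (X : Matrix (G × G × (R → G)) (G × G × (R → G)) ℂ) :
    frameChange G R * X * (frameChange G R)ᴴ = X.submatrix (efc G R) (efc G R) := by
  rw [frameChange_conjT, frameChange_eq, Matrix.mul_assoc,
    PEquiv.mul_toMatrix_toPEquiv, PEquiv.toMatrix_toPEquiv_mul]
  simp [Matrix.submatrix_submatrix]

end Perm2

section Embed
variable {G : Type*} [Group G] [Fintype G] [DecidableEq G]
    {R : Type*} [Fintype R] [DecidableEq R]

lemma embedAt_one (S : R) : embedAt S (1 : Matrix G G ℂ) = 1 := by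
  rw [embedAt, show (fun k : R => if k = S then (1 : Matrix G G ℂ) else 1) = fun _ => 1 by
    funext k; split <;> rfl, prodMat_one]

lemma embedAt_mul (S : R) (A B : Matrix G G ℂ) :
    embedAt S A * embedAt S B = embedAt S (A * B) := by
  rw [embedAt, embedAt, embedAt, prodMat_mul]
  refine congrArg prodMat (funext fun k => ?_)
  by_cases hk : k = S <;> simp [hk]

lemma embedAt_conjT (S : R) (A : Matrix G G ℂ) :
    (embedAt S A)ᴴ = embedAt S Aᴴ := by
  rw [embedAt, embedAt, prodMat_conjT]
  refine congrArg prodMat (funext fun k => ?_)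
  by_cases hk : k = S <;> simp [hk]

lemma rightReg_conj (g : G) (US : Matrix G G ℂ) (x y : G) :
    (rightReg g * US * (rightReg g)ᴴ) x y = US (x * g) (y * g) := by
  simp only [Matrix.mul_apply, rightReg, conjTranspose_apply, of_apply,
    eq_mul_inv_iff_mul_eq]
  rw [Finset.sum_eq_single (y * g)]
  · rw [Finset.sum_eq_single (x * g)] <;> simp +contextual [eq_comm]
  · intro d _ hd
    simp [hd, eq_comm]
  · simp

lemma embedAt_shift (S : R) (US : Matrix G G ℂ) (g : G) (a3 b3 : R → G) :
    embedAt S US (fun k => a3 k * g) (fun k => b3 k * g) =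
      embedAt S (rightReg g * US * (rightReg g)ᴴ) a3 b3 := by
  simp only [embedAt, prodMat, of_apply]
  refine Finset.prod_congr rfl fun k _ => ?_
  split
  · rw [rightReg_conj]
  · simp [Matrix.one_apply]

end Embed

/-- Gate-transform theorem for finite groups: for a unitary `U_S` on
`H_S`, `S ∈ R`, the transformed gate `U_S^(i) = U_{0→i} Ũ_S U_{0→i}†` equals the
controlled operator `∑_g |g⟩⟨g|_0 ⊗ 1_i ⊗ (⊗_{k≠S} 1_k) ⊗ (U_R(g) U_S U_R(g)†)_S`,
and `U_S^(i)` is unitary. -/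
theorem frameChange_gate_transform
    (G : Type*) [Group G] [Fintype G] [DecidableEq G]
    (R : Type*) [Fintype R] [DecidableEq R]
    (S : R) (US : Matrix G G ℂ)
    (hUS : USᴴ * US = 1 ∧ US * USᴴ = 1) :
    frameChange G R * tens3 1 1 (embedAt S US) * (frameChange G R)ᴴ =
      (∑ g : G,
        tens3 (ketbra g) 1 (embedAt S (rightReg g * US * (rightReg g)ᴴ))) ∧
    (frameChange G R * tens3 1 1 (embedAt S US) * (frameChange G R)ᴴ)ᴴ *
        (frameChange G R * tens3 1 1 (embedAt S US) * (frameChange G R)ᴴ) = 1 ∧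
    (frameChange G R * tens3 1 1 (embedAt S US) * (frameChange G R)ᴴ) *
        (frameChange G R * tens3 1 1 (embedAt S US) * (frameChange G R)ᴴ)ᴴ = 1 := by
  have h1 := frameChange_conjT_mul G R
  have h2 := frameChange_mul_conjT G R
  have hX : (tens3 1 1 (embedAt S US) :
      Matrix (G × G × (R → G)) (G × G × (R → G)) ℂ)ᴴ * tens3 1 1 (embedAt S US) = 1 := by
    rw [tens3_conjT, tens3_mul, embedAt_conjT, embedAt_mul, hUS.1, embedAt_one]
    simp [tens3_one]
  have hX' : (tens3 1 1 (embedAt S US) :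
      Matrix (G × G × (R → G)) (G × G × (R → G)) ℂ) * (tens3 1 1 (embedAt S US))ᴴ = 1 := by
    rw [tens3_conjT, tens3_mul, embedAt_conjT, embedAt_mul, hUS.2, embedAt_one]
    simp [tens3_one]
  refine ⟨?_, ?_, ?_⟩
  · rw [frameChange_conj]
    ext a b
    simp only [Matrix.submatrix_apply, tens3, of_apply, Matrix.sum_apply, ketbra, efc,
      Equiv.coe_fn_mk, Matrix.one_apply]
    rw [Finset.sum_eq_single a.1]
    · by_cases h : a.1 = b.1
      · simp only [h, if_pos rfl, and_self, mul_one, one_mul]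
        rw [h] at *
        rw [embedAt_shift]
        ring
      · have h' : ¬ b.1 = a.1 := fun hh => h hh.symm
        simp [h, h']
    · intro g _ hg
      simp [Ne.symm hg]
    · simp
  · simp only [conjTranspose_mul, conjTranspose_conjTranspose, Matrix.mul_assoc]
    rw [show (frameChange G R)ᴴ * (frameChange G R *
        (tens3 1 1 (embedAt S US) * (frameChange G R)ᴴ)) =
        tens3 1 1 (embedAt S US) * (frameChange G R)ᴴ from by
      rw [← Matrix.mul_assoc, h1, Matrix.one_mul]]
    rw [show (tens3 1 1 (embedAt S US) :
        Matrix (G × G × (R → G)) (G × G × (R → G)) ℂ)ᴴ *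
        (tens3 1 1 (embedAt S US) * (frameChange G R)ᴴ) = (frameChange G R)ᴴ from by
      rw [← Matrix.mul_assoc, hX, Matrix.one_mul]]
    exact h2
  · simp only [conjTranspose_mul, conjTranspose_conjTranspose, Matrix.mul_assoc]
    rw [show (frameChange G R)ᴴ * (frameChange G R *
        ((tens3 1 1 (embedAt S US))ᴴ * (frameChange G R)ᴴ)) =
        (tens3 1 1 (embedAt S US))ᴴ * (frameChange G R)ᴴ from by
      rw [← Matrix.mul_assoc, h1, Matrix.one_mul]]
    rw [show (tens3 1 1 (embedAt S US) :
        Matrix (G × G × (R → G)) (G × G × (R → G)) ℂ) *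
        ((tens3 1 1 (embedAt S US))ᴴ * (frameChange G R)ᴴ) = (frameChange G R)ᴴ from by
      rw [← Matrix.mul_assoc, hX', Matrix.one_mul]]
    exact h2
end

section
/- Symmetry-commuting gates remain local: Let G be a finite group, U_{0→i} the finite-group frame-change unitary, and U_S a unitary on H_S for some S ∈ R such that U_R(g) U_S U_R(g)† = U_S for all g ∈ G. Then U_{0→i} (1 ⊗ U_S) U_{0→i}† = 1_0 ⊗ 1_i ⊗ (⊗_{k∈R∖{S}} 1_k) ⊗ U_S; that is, the gate remains strictly local on S and decouples from the reference-frame register. -/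
open Matrix Finset

-- key lemma: explicit form of frameChange
lemma frameChange_apply (G : Type*) [Group G] [Fintype G] [DecidableEq G]
    (R : Type*) [Fintype R] [DecidableEq R] (a b : G × G × (R → G)) :
    frameChange G R a b =
      if b = (a.2.1, a.1, fun k => a.2.2 k * a.1) then 1 else 0 := by
  obtain ⟨a1, a2, af⟩ := a
  obtain ⟨b1, b2, bf⟩ := b
  simp only [frameChange, Matrix.mul_apply, swap0i, Wmap, Matrix.sum_apply, tens3,
    ketbra, rightReg, prodMat, Matrix.one_apply, Matrix.of_apply, Fintype.sum_prod_type]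
  simp only [ite_and, ite_mul, zero_mul, one_mul, mul_ite, mul_zero, mul_one, Finset.sum_ite_eq, Finset.sum_ite_eq', Finset.mem_univ, if_true, Finset.sum_ite_irrel, Finset.sum_const_zero]
  simp only [Finset.prod_boole, Prod.mk.injEq, funext_iff]
  by_cases h1 : a1 = b2 <;> by_cases h2 : a2 = b1 <;>
    simp [h1, h2, eq_comm, eq_mul_inv_iff_mul_eq]

lemma US_conj_entry {G : Type*} [Group G] [Fintype G] [DecidableEq G]
    (US : Matrix G G ℂ)
    (hcomm : ∀ g : G, rightReg g * US * (rightReg g)ᴴ = US)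
    (g x y : G) : US (x * g) (y * g) = US x y := by
  have h := congrFun (congrFun (hcomm g) x) y
  simp only [Matrix.mul_apply, rightReg, Matrix.conjTranspose_apply, Matrix.of_apply,
    eq_mul_inv_iff_mul_eq, apply_ite (star : ℂ → ℂ), star_one, star_zero,
    ite_mul, zero_mul, one_mul, mul_ite, mul_zero, mul_one,
    Finset.sum_ite_eq, Finset.sum_ite_eq', Finset.mem_univ, if_true,
    Finset.sum_ite_irrel, Finset.sum_const_zero] at h
  exact h

lemma frameChange_mul_apply {G : Type*} [Group G] [Fintype G] [DecidableEq G]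
    {R : Type*} [Fintype R] [DecidableEq R]
    (X : Matrix (G × G × (R → G)) (G × G × (R → G)) ℂ) (a b : G × G × (R → G)) :
    (frameChange G R * X) a b = X (a.2.1, a.1, fun k => a.2.2 k * a.1) b := by
  simp [Matrix.mul_apply, frameChange_apply, ite_mul, zero_mul, one_mul]

lemma mul_frameChange_conjT_apply {G : Type*} [Group G] [Fintype G] [DecidableEq G]
    {R : Type*} [Fintype R] [DecidableEq R]
    (X : Matrix (G × G × (R → G)) (G × G × (R → G)) ℂ) (a b : G × G × (R → G)) :
    (X * (frameChange G R)ᴴ) a b = X a (b.2.1, b.1, fun k => b.2.2 k * b.1) := by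
  simp [Matrix.mul_apply, Matrix.conjTranspose_apply, frameChange_apply, apply_ite (star : ℂ → ℂ), star_one, star_zero,
    mul_ite, mul_zero, mul_one]


/-- Symmetry-commuting gates remain local: if
`U_R(g) U_S U_R(g)† = U_S` for all `g ∈ G`, then
`U_{0→i} (1 ⊗ U_S) U_{0→i}† = 1_0 ⊗ 1_i ⊗ (⊗_{k≠S} 1_k) ⊗ U_S`. -/
theorem frameChange_symmetry_commuting_local
    (G : Type*) [Group G] [Fintype G] [DecidableEq G]
    (R : Type*) [Fintype R] [DecidableEq R]
    (S : R) (US : Matrix G G ℂ)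
    (hUS : USᴴ * US = 1 ∧ US * USᴴ = 1)
    (hcomm : ∀ g : G, rightReg g * US * (rightReg g)ᴴ = US) :
    frameChange G R * tens3 1 1 (embedAt S US) * (frameChange G R)ᴴ =
      tens3 1 1 (embedAt S US) := by
  ext a b
  rw [mul_frameChange_conjT_apply, frameChange_mul_apply]
  obtain ⟨a1, a2, af⟩ := a
  obtain ⟨b1, b2, bf⟩ := b
  simp only [tens3, embedAt, prodMat, Matrix.of_apply, Matrix.one_apply]
  by_cases h1 : a1 = b1 <;> by_cases h2 : a2 = b2 <;> simp [h1, h2]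
  subst h1 h2
  refine Finset.prod_congr rfl fun k _ => ?_
  by_cases hk : k = S
  · simp [hk, US_conj_entry US hcomm]
  · simp [hk, Matrix.one_apply, mul_left_inj]
end

section
/- Hadamard in frame A: On (ℂ²)^{⊗3} with factors A, B, C, let U_{C→A} = SWAP_{A,C} ∘ W_{AB} with W_{AB} = |0⟩⟨0|_A ⊗ 1_B ⊗ 1_C + |1⟩⟨1|_A ⊗ X_B ⊗ 1_C. Then U_{C→A} · (H_A ⊗ 1_B ⊗ 1_C) · U_{C→A}† = (1/√2) · ( 1_A ⊗ 1_B ⊗ Z_C + 1_A ⊗ X_B ⊗ X_C ); that is, in frame A the local Hadamard on A becomes a two-qubit gate entangling B and C. -/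
open Matrix Finset Kronecker

/-- Three-qubit index type: factors labeled A, B, C. -/
abbrev Q3 := Fin 2 × Fin 2 × Fin 2

/-- Pauli X. -/
noncomputable def X : Matrix (Fin 2) (Fin 2) ℂ := !![0, 1; 1, 0]

/-- Pauli Z. -/
noncomputable def Z : Matrix (Fin 2) (Fin 2) ℂ := !![1, 0; 0, -1]

/-- Hadamard gate. -/
noncomputable def Hd : Matrix (Fin 2) (Fin 2) ℂ :=
  (Real.sqrt 2 : ℂ)⁻¹ • !![1, 1; 1, -1]

/-- Projector `|0⟩⟨0|`. -/
noncomputable def P0 : Matrix (Fin 2) (Fin 2) ℂ := !![1, 0; 0, 0]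

/-- Projector `|1⟩⟨1|`. -/
noncomputable def P1 : Matrix (Fin 2) (Fin 2) ℂ := !![0, 0; 0, 1]

/-- Tensor product `A ⊗ B ⊗ C` of three one-qubit operators, as an 8×8 matrix
on `ℂ²⊗ℂ²⊗ℂ²` with factors A, B, C. -/
noncomputable def k3 (P Q T : Matrix (Fin 2) (Fin 2) ℂ) : Matrix Q3 Q3 ℂ :=
  Matrix.of fun a b => P a.1 b.1 * Q a.2.1 b.2.1 * T a.2.2 b.2.2

/-- `SWAP` of factors A and C. -/
noncomputable def SWAP_AC : Matrix Q3 Q3 ℂ :=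
  Matrix.of fun a b => if a.1 = b.2.2 ∧ a.2.1 = b.2.1 ∧ a.2.2 = b.1 then 1 else 0

/-- `SWAP` of factors A and B. -/
noncomputable def SWAP_AB : Matrix Q3 Q3 ℂ :=
  Matrix.of fun a b => if a.1 = b.2.1 ∧ a.2.1 = b.1 ∧ a.2.2 = b.2.2 then 1 else 0

/-- `SWAP` of factors B and C. -/
noncomputable def SWAP_BC : Matrix Q3 Q3 ℂ :=
  Matrix.of fun a b => if a.1 = b.1 ∧ a.2.1 = b.2.2 ∧ a.2.2 = b.2.1 then 1 else 0

/-- Computational basis vector `|abc⟩ = |a⟩_A ⊗ |b⟩_B ⊗ |c⟩_C`. -/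
def ket3 (a b c : Fin 2) : Q3 → ℂ := fun x => if x = (a, b, c) then 1 else 0

/-- `CNOT` with control A and target B (identity on C). -/
noncomputable def CNOT_AB : Matrix Q3 Q3 ℂ := k3 P0 1 1 + k3 P1 X 1

/-- `CNOT` with control A and target C (identity on B). -/
noncomputable def CNOT_AC : Matrix Q3 Q3 ℂ := k3 P0 1 1 + k3 P1 1 X

/-- `CNOT` with control B and target C (identity on A). -/
noncomputable def CNOT_BC : Matrix Q3 Q3 ℂ := k3 1 P0 1 + k3 1 P1 X

/-- `CNOT` with control C and target B (identity on A). -/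
noncomputable def CNOT_CB : Matrix Q3 Q3 ℂ := k3 1 1 P0 + k3 1 X P1

/-- `W_{AB} = |0⟩⟨0|_A ⊗ 1_B ⊗ 1_C + |1⟩⟨1|_A ⊗ X_B ⊗ 1_C`. -/
noncomputable def WAB3 : Matrix Q3 Q3 ℂ := k3 P0 1 1 + k3 P1 X 1

/-- The frame-change operator `U_{C→A} = SWAP_{A,C} ∘ W_{AB}`. -/
noncomputable def UCA : Matrix Q3 Q3 ℂ := SWAP_AC * WAB3

lemma k3_mul (P Q T P' Q' T' : Matrix (Fin 2) (Fin 2) ℂ) :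
    k3 P Q T * k3 P' Q' T' = k3 (P * P') (Q * Q') (T * T') := by
  ext ⟨a,b,c⟩ ⟨d,e,f⟩
  simp only [k3, Matrix.mul_apply, Matrix.of_apply, Fintype.sum_prod_type, Fin.sum_univ_two]
  ring

lemma k3_conjT (P Q T : Matrix (Fin 2) (Fin 2) ℂ) :
    (k3 P Q T)ᴴ = k3 Pᴴ Qᴴ Tᴴ := by
  ext ⟨a,b,c⟩ ⟨d,e,f⟩
  simp [k3, Matrix.conjTranspose_apply]

set_option maxHeartbeats 1000000 in
lemma swap_conjT : SWAP_ACᴴ = SWAP_AC := by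
  ext ⟨a,b,c⟩ ⟨d,e,f⟩
  fin_cases a <;> fin_cases b <;> fin_cases c <;> fin_cases d <;> fin_cases e <;> fin_cases f <;>
    simp [SWAP_AC, Matrix.conjTranspose_apply]

set_option maxHeartbeats 1000000 in
lemma swap_k3_swap (P Q T : Matrix (Fin 2) (Fin 2) ℂ) :
    SWAP_AC * k3 P Q T * SWAP_AC = k3 T Q P := by
  ext ⟨a,b,c⟩ ⟨d,e,f⟩
  simp only [SWAP_AC, k3, Matrix.mul_apply, Matrix.of_apply, Fintype.sum_prod_type,
    Fin.sum_univ_two]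
  fin_cases a <;> fin_cases b <;> fin_cases c <;> fin_cases d <;> fin_cases e <;> fin_cases f <;>
    simp <;> ring

lemma P0_conjT : P0ᴴ = P0 := by
  ext i j; fin_cases i <;> fin_cases j <;> simp [P0]

lemma P1_conjT : P1ᴴ = P1 := by
  ext i j; fin_cases i <;> fin_cases j <;> simp [P1]

lemma X_conjT : Xᴴ = X := by
  ext i j; fin_cases i <;> fin_cases j <;> simp [X]

set_option maxHeartbeats 1000000 in
lemma hW : WAB3 * k3 Hd 1 1 * WAB3ᴴ =
    (Real.sqrt 2 : ℂ)⁻¹ • (k3 Z 1 1 + k3 X X 1) := by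
  simp only [WAB3, Matrix.add_mul, Matrix.mul_add, Matrix.conjTranspose_add, k3_conjT, k3_mul,
    P0_conjT, P1_conjT, X_conjT, Matrix.conjTranspose_one]
  ext ⟨a,b,c⟩ ⟨d,e,f⟩
  simp only [k3, Hd, X, Z, P0, P1, Matrix.mul_apply, Matrix.add_apply, Matrix.smul_apply,
    Matrix.of_apply, Fin.sum_univ_two, smul_eq_mul]
  fin_cases a <;> fin_cases b <;> fin_cases c <;> fin_cases d <;> fin_cases e <;> fin_cases f <;>
    simp [Matrix.one_apply] <;> ring

/-- Hadamard in frame A: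
`U_{C→A} · (H_A ⊗ 1_B ⊗ 1_C) · U_{C→A}† = (1/√2)(1_A ⊗ 1_B ⊗ Z_C + 1_A ⊗ X_B ⊗ X_C)`;
in frame A the local Hadamard on A becomes a two-qubit gate entangling B and C. -/
theorem hadamard_in_frame_A :
    UCA * k3 Hd 1 1 * UCAᴴ =
      (Real.sqrt 2 : ℂ)⁻¹ • (k3 1 1 Z + k3 1 X X) := by
  calc UCA * k3 Hd 1 1 * UCAᴴ
      = SWAP_AC * (WAB3 * k3 Hd 1 1 * WAB3ᴴ) * SWAP_AC := by
        simp only [UCA, Matrix.conjTranspose_mul, swap_conjT, Matrix.mul_assoc]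
    _ = (Real.sqrt 2 : ℂ)⁻¹ • (SWAP_AC * k3 Z 1 1 * SWAP_AC + SWAP_AC * k3 X X 1 * SWAP_AC) := by
        rw [hW]; simp only [Matrix.mul_smul, Matrix.smul_mul, Matrix.mul_add, Matrix.add_mul,
          smul_add]
    _ = (Real.sqrt 2 : ℂ)⁻¹ • (k3 1 1 Z + k3 1 X X) := by rw [swap_k3_swap, swap_k3_swap]
end
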